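/- arXiv:math/0701257 — 3 statements merged into one kernel-verified Lean document; each statement's English description precedes it below -/
import Mathlib

section
/- Let l/k be a finite Galois extension of fields, let G be a finite group with a cyclic normal subgroup I such that G/I ≅ Gal(l/k), and let V be a one-dimensional l-vector space on which G acts semilinearly (for g ∈ G, λ ∈ l, v, w ∈ V: g.(λv + w) = ḡ(λ)(g.v) + g.w, where ḡ is the image of g in Gal(l/k)). If Gal(l/k) is abelian, then Ind_I^G Res_I^G (V) ≅ ⊕^{(G:I)} V as k[G]-modules. -/
/-!
Since `π` is onto with kernel `I`, `Ind_I^G Res_I^G V` is `V ⊗ k[G/I]`: the functions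
`h : Gal(l/k) → V`, on which `g` acts by `h ↦ ρ g ∘ h ∘ ((π g)⁻¹ * ·)`. Choose a `k`-basis
`(θ_τ)` of `l` indexed by `Gal(l/k)`. By Dedekind's lemma the matrix `(σ θ_τ)_{τ,σ}` is
invertible over `l`, and by semilinearity of `ρ` it intertwines this action with the pointwise
action `h ↦ ρ g ∘ h`, which is `⊕_{Gal(l/k)} V`.
-/

universe u

open Function

section Induction

variable {k : Type u} [Field k] {G : Type u} [Group G] (I : Subgroup G)
  {V : Type u} [AddCommGroup V] [Module k V] (σ : Representation k (↥I) V)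

/-- The underlying `k`-vector space of the induced representation `Ind_I^G V`:
the space of functions `f : G → V` with `f (i * g) = σ i (f g)` for `i ∈ I`.
(For finite groups this model of induction agrees with `k[G] ⊗_{k[I]} V`.) -/
def indCar : Submodule k (G → V) where
  carrier := { f | ∀ (i : ↥I) (g : G), f ((i : G) * g) = σ i (f g) }
  add_mem' := by
    intro a b ha hb i g
    simp [ha i g, hb i g]
  zero_mem' := by intro i g; simp
  smul_mem' := by
    intro c a ha i g
    simp [ha i g]

/-- The induced representation `Ind_I^G V` of `G`, where `G` acts by right translation
of the argument. -/
def indRep : Representation k G ↥(indCar I σ) where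
  toFun g :=
    { toFun := fun f => ⟨fun x => (f : G → V) (x * g), fun i x => by
        simpa [mul_assoc] using f.2 i (x * g)⟩
      map_add' := fun f₁ f₂ => rfl
      map_smul' := fun c f => rfl }
  map_one' := by
    ext f x
    simp
  map_mul' g h := by
    ext f x
    simp [mul_assoc]

end Induction

namespace Matrix

variable {R : Type*} [CommSemiring R] {ι : Type*} [Fintype ι] {M : Type*} [AddCommMonoid M]
  [Module R M]

def toPiLin (A : Matrix ι ι R) : (ι → M) →ₗ[R] (ι → M) :=
  LinearMap.pi fun i => ∑ j, A i j • LinearMap.proj j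

theorem toPiLin_apply (A : Matrix ι ι R) (h : ι → M) (i : ι) :
    A.toPiLin h i = ∑ j, A i j • h j := by
  simp [toPiLin]

theorem toPiLin_mul (A B : Matrix ι ι R) :
    (A * B).toPiLin = (A.toPiLin ∘ₗ B.toPiLin : (ι → M) →ₗ[R] (ι → M)) := by
  ext h i
  simp only [LinearMap.comp_apply, toPiLin_apply, mul_apply, Finset.sum_smul, Finset.smul_sum,
    mul_smul]
  exact Finset.sum_comm

theorem toPiLin_one [DecidableEq ι] :
    (1 : Matrix ι ι R).toPiLin = (LinearMap.id : (ι → M) →ₗ[R] (ι → M)) := by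
  ext h i
  simp [toPiLin_apply, one_apply]

def toPiLinEquiv [DecidableEq ι] (A : (Matrix ι ι R)ˣ) : (ι → M) ≃ₗ[R] (ι → M) :=
  LinearEquiv.ofLinearMap (A : Matrix ι ι R).toPiLin (↑A⁻¹ : Matrix ι ι R).toPiLin
    (by rw [← toPiLin_mul, A.mul_inv, toPiLin_one]) (by rw [← toPiLin_mul, A.inv_mul, toPiLin_one])

theorem toPiLinEquiv_apply [DecidableEq ι] (A : (Matrix ι ι R)ˣ) (h : ι → M) :
    toPiLinEquiv A h = (A : Matrix ι ι R).toPiLin h := rfl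

end Matrix

section GaloisMatrix

variable (k : Type*) {l : Type*} [Field k] [Field l] [Algebra k l]

def galoisMatrix {ι : Type*} (θ : ι → l) : Matrix ι (l ≃ₐ[k] l) l :=
  Matrix.of fun i σ => σ (θ i)

variable {k}

theorem isUnit_galoisMatrix [FiniteDimensional k l] [DecidableEq (l ≃ₐ[k] l)]
    (θ : Module.Basis (l ≃ₐ[k] l) k l) : IsUnit (galoisMatrix k θ) := by
  refine Matrix.mulVec_injective_iff_isUnit.1 <| (injective_iff_map_eq_zero
    (galoisMatrix k θ).mulVecLin).2 fun x hx => ?_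
  have hsum : ∑ σ, x σ • (σ : l →ₐ[k] l).toLinearMap = 0 := θ.ext fun τ => by
    simpa [galoisMatrix, Matrix.mulVec, dotProduct, mul_comm] using congrFun hx τ
  have hli := (linearIndependent_toLinearMap k l l).comp _ AlgEquiv.coe_toAlgHom_injective
  exact funext <| Fintype.linearIndependent_iff.1 hli x hsum

variable {V : Type*} [AddCommGroup V] [Module l V]

theorem galoisMatrix_toPiLin_semilinear [FiniteDimensional k l] (θ : (l ≃ₐ[k] l) → l)
    (α : l ≃ₐ[k] l) (φ : V →+ V) (hφ : ∀ (a : l) (v : V), φ (a • v) = α a • φ v)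
    (h : (l ≃ₐ[k] l) → V) (τ : l ≃ₐ[k] l) :
    (galoisMatrix k θ).toPiLin (fun σ => φ (h (α⁻¹ * σ))) τ
      = φ ((galoisMatrix k θ).toPiLin h τ) := by
  simp only [Matrix.toPiLin_apply, map_sum, hφ, galoisMatrix, Matrix.of_apply]
  exact Fintype.sum_equiv (Equiv.mulLeft α⁻¹) _ _ fun σ => by simp

end GaloisMatrix

section Inflation

variable {k : Type u} [Field k] {G : Type u} [Group G] {V : Type u} [AddCommGroup V] [Module k V]
  (ρ : Representation k G V) {Q : Type*} [Group Q] (π : G →* Q)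

def indResOfFun : (Q → V) →ₗ[k] indCar π.ker (ρ.comp π.ker.subtype) where
  toFun h := ⟨fun x => ρ x (h (π x⁻¹)), fun i x => by
    have hi : π i = 1 := i.2
    simp [hi, map_mul]⟩
  map_add' _ _ := by ext; simp
  map_smul' _ _ := by ext; simp

theorem indResOfFun_apply (h : Q → V) (x : G) :
    (indResOfFun ρ π h : G → V) x = ρ x (h (π x⁻¹)) := rfl

theorem indRep_indResOfFun (g : G) (h : Q → V) :
    indRep π.ker (ρ.comp π.ker.subtype) g (indResOfFun ρ π h)
      = indResOfFun ρ π (fun q => ρ g (h ((π g)⁻¹ * q))) := by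
  ext x
  simp [indRep, indResOfFun_apply, map_mul]

theorem apply_apply_inv_eq_of_map_eq (f : indCar π.ker (ρ.comp π.ker.subtype)) {x y : G}
    (hxy : π x = π y) : ρ x ((f : G → V) x⁻¹) = ρ y ((f : G → V) y⁻¹) := by
  have hmem : y⁻¹ * x ∈ π.ker := by simp [hxy]
  have hf : (f : G → V) y⁻¹ = ρ (y⁻¹ * x) ((f : G → V) x⁻¹) := by
    simpa using f.2 ⟨_, hmem⟩ x⁻¹
  rw [hf, ← Module.End.mul_apply, ← map_mul, mul_inv_cancel_left]

theorem indResOfFun_bijective (hπ : Surjective π) : Bijective (indResOfFun ρ π) := by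
  refine ⟨(injective_iff_map_eq_zero _).2 fun h h0 => funext fun q => ?_, fun f => ?_⟩
  · obtain ⟨x, rfl⟩ := hπ q
    have hx := congrArg (fun f : indCar π.ker (ρ.comp π.ker.subtype) => (f : G → V) x⁻¹) h0
    simpa [indResOfFun_apply] using congrArg (ρ x) hx
  · refine ⟨fun q => ρ (surjInv hπ q) ((f : G → V) (surjInv hπ q)⁻¹),
      Subtype.ext <| funext fun x => ?_⟩
    rw [indResOfFun_apply, apply_apply_inv_eq_of_map_eq ρ π f (surjInv_eq hπ _), inv_inv]
    simp

end Inflation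

theorem ind_res_iso_of_abelian_galois_general
    (k l : Type u) [Field k] [Field l] [Algebra k l] [FiniteDimensional k l] [IsGalois k l]
    (G : Type u) [Group G] (I : Subgroup G)
    (π : G →* (l ≃ₐ[k] l)) (hπ : Surjective π) (hker : π.ker = I)
    (V : Type u) [AddCommGroup V] [Module k V] [Module l V] [IsScalarTower k l V]
    (ρ : Representation k G V)
    (hsemi : ∀ (g : G) (a : l) (v : V), ρ g (a • v) = (π g a) • (ρ g v)) :
    ∃ e : ↥(indCar I (ρ.comp I.subtype)) ≃ₗ[k] (Fin I.index → V),
      ∀ (g : G) (f : ↥(indCar I (ρ.comp I.subtype))) (j : Fin I.index),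
        e (indRep I (ρ.comp I.subtype) g f) j = ρ g (e f j) := by
  classical
  subst hker
  have hindex : π.ker.index = Nat.card (l ≃ₐ[k] l) := by
    rw [Subgroup.index_ker, MonoidHom.range_eq_top.2 hπ, Subgroup.card_top]
  have hfinrank : Fintype.card (l ≃ₐ[k] l) = Module.finrank k l := by
    rw [← Nat.card_eq_fintype_card, IsGalois.card_aut_eq_finrank]
  let θ : Module.Basis (l ≃ₐ[k] l) k l :=
    (Module.finBasis k l).reindex (Fintype.equivFinOfCardEq hfinrank).symm
  have hbij := indResOfFun_bijective ρ π hπ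
  refine ⟨(LinearEquiv.ofBijective _ hbij).symm
    ≪≫ₗ (Matrix.toPiLinEquiv (M := V) (isUnit_galoisMatrix θ).unit).restrictScalars k
    ≪≫ₗ LinearEquiv.funCongrLeft k V ((finCongr hindex).trans (Finite.equivFin _).symm), ?_⟩
  intro g f j
  obtain ⟨h, rfl⟩ := hbij.2 f
  simp only [indRep_indResOfFun, LinearEquiv.trans_apply, LinearEquiv.ofBijective_symm_apply_apply,
    LinearEquiv.funCongrLeft_apply, LinearEquiv.restrictScalars_apply, Matrix.toPiLinEquiv_apply,
    IsUnit.unit_spec]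
  exact galoisMatrix_toPiLin_semilinear θ (π g) (ρ g).toAddMonoidHom (hsemi g) h _

/-- **Statement 4** (Proposition 3.6 (a)): let `l/k` be a finite Galois extension, `G` a
finite group with a cyclic normal subgroup `I` such that `G/I ≅ Gal(l/k)` (via a surjection
`π : G → Gal(l/k)` with kernel `I`), and let `V` be a one-dimensional `l`-vector space on
which `G` acts `k`-linearly and semilinearly (`g.(a • v) = π(g)(a) • g.v`).  If `Gal(l/k)`
is abelian, then `Ind_I^G Res_I^G V ≅ ⊕^{(G:I)} V` as `k[G]`-modules. -/
theorem ind_res_iso_of_abelian_galois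
    (k l : Type u) [Field k] [Field l] [Algebra k l] [FiniteDimensional k l] [IsGalois k l]
    (G : Type u) [Group G] [Finite G] (I : Subgroup G) [I.Normal] [IsCyclic ↥I]
    (π : G →* (l ≃ₐ[k] l)) (hπ : Surjective π) (hker : π.ker = I)
    (V : Type u) [AddCommGroup V] [Module k V] [Module l V] [IsScalarTower k l V]
    (hV : Module.finrank l V = 1)
    (ρ : Representation k G V)
    (hsemi : ∀ (g : G) (a : l) (v : V), ρ g (a • v) = (π g a) • (ρ g v))
    (habel : ∀ σ τ : (l ≃ₐ[k] l), σ * τ = τ * σ) :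
    ∃ e : ↥(indCar I (ρ.comp I.subtype)) ≃ₗ[k] (Fin I.index → V),
      ∀ (g : G) (f : ↥(indCar I (ρ.comp I.subtype))) (j : Fin I.index),
        e (indRep I (ρ.comp I.subtype) g f) j = ρ g (e f j) :=
  ind_res_iso_of_abelian_galois_general k l G I π hπ hker V ρ hsemi
end

section
/- Let l/k be a finite Galois extension of fields, let G be a finite group with a cyclic normal subgroup I such that G/I ≅ Gal(l/k), and let V be a one-dimensional l-vector space on which G acts semilinearly. If I is central in G, then the roots of unity through which I acts on V all lie in k, and there is a one-dimensional k-representation χ of I such that Res_I^G(V) ≅ ⊕^{(G:I)} χ as k[I]-modules. -/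
universe u

open Function Module

/-! Elements of `I = ker π` act `l`-linearly on the `l`-line `V`, hence by scalars `a ∈ l`. If `i`
commutes with `g`, comparing `ρ g (ρ i v)` with `ρ i (ρ g v)` via semilinearity gives `π g a = a`;
as `π` is onto, `a` is Galois-invariant and so lies in `k`. Thus `I` acts through a character
`χ : I → k` in every `k`-basis of `V`, whose size is `[l : k] = (G : I)`.
-/

theorem Representation.exists_monoidHom_of_forall_exists_smul {k M V : Type*} [Field k]
    [Monoid M] [AddCommGroup V] [Module k V] [Nontrivial V] (ρ : Representation k M V)
    (h : ∀ m, ∃ c : k, ∀ v, ρ m v = c • v) : ∃ χ : M →* k, ∀ m v, ρ m v = χ m • v := by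
  choose c hc using h
  obtain ⟨v₀, hv₀⟩ := exists_ne (0 : V)
  have hinj : Injective fun a : k => a • v₀ := smul_left_injective k hv₀
  refine ⟨{ toFun := c, map_one' := hinj ?_, map_mul' := fun m n => hinj ?_ }, hc⟩
  · simp [← hc]
  · simp [← hc, mul_smul]

theorem MonoidHom.index_ker_eq_finrank_of_surjective {k l G : Type*} [Field k] [Field l]
    [Algebra k l] [FiniteDimensional k l] [IsGalois k l] [Group G] (π : G →* Gal(l/k))
    (hπ : Surjective π) : π.ker.index = finrank k l := by
  rw [Subgroup.index_ker, MonoidHom.range_eq_top_of_surjective π hπ, Subgroup.card_top,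
    IsGalois.card_aut_eq_finrank]

section SemilinearLine

variable {k l G V : Type*} [Field k] [Field l] [Algebra k l] [Group G]
  [AddCommGroup V] [Module k V] [Module l V]
  {π : G →* Gal(l/k)} {ρ : Representation k G V}

theorem exists_eq_smul_of_mem_ker (hV : finrank l V = 1)
    (hsemi : ∀ (g : G) (a : l) (v : V), ρ g (a • v) = π g a • ρ g v) {g : G} (hg : g ∈ π.ker) :
    ∃ a : l, ∀ v, ρ g v = a • v := by
  let f : V →ₗ[l] V :=
    { toFun := ρ g
      map_add' := map_add (ρ g)
      map_smul' := fun a v => by rw [hsemi, (π.mem_ker).mp hg]; rfl }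
  obtain ⟨a, ha, -⟩ := f.existsUnique_eq_smul_id_of_finrank_eq_one hV
  exact ⟨a, fun v => LinearMap.congr_fun ha v⟩

theorem apply_scalar_eq_of_commute [Nontrivial V]
    (hsemi : ∀ (g : G) (a : l) (v : V), ρ g (a • v) = π g a • ρ g v) {g h : G}
    (hgh : Commute g h) {a : l} (ha : ∀ v, ρ h v = a • v) : π g a = a := by
  obtain ⟨v, hv⟩ := exists_ne (0 : V)
  have hgv : ρ g v ≠ 0 := fun h0 => hv <| by
    simpa [← Module.End.mul_apply, ← map_mul] using congr_arg (ρ g⁻¹) h0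
  refine smul_left_injective l hgv ?_
  calc π g a • ρ g v = ρ g (ρ h v) := by rw [ha, hsemi]
    _ = ρ h (ρ g v) := by rw [← Module.End.mul_apply, ← map_mul, hgh.eq, map_mul]; rfl
    _ = a • ρ g v := ha _

end SemilinearLine

theorem res_iso_of_central_inertia_general
    (k l : Type u) [Field k] [Field l] [Algebra k l] [FiniteDimensional k l] [IsGalois k l]
    (G : Type u) [Group G] (I : Subgroup G)
    (π : G →* (l ≃ₐ[k] l)) (hπ : Surjective π) (hker : π.ker = I)
    (V : Type u) [AddCommGroup V] [Module k V] [Module l V] [IsScalarTower k l V]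
    (hV : Module.finrank l V = 1)
    (ρ : Representation k G V)
    (hsemi : ∀ (g : G) (a : l) (v : V), ρ g (a • v) = (π g a) • (ρ g v))
    (hcentral : I ≤ Subgroup.center G) :
    (∀ i : ↥I, ∃ c : k, c ^ Nat.card ↥I = 1 ∧
        ∀ v : V, ρ (i : G) v = algebraMap k l c • v) ∧
    (∃ χ : ↥I →* kˣ, ∃ e : V ≃ₗ[k] (Fin I.index → k),
        ∀ (i : ↥I) (v : V) (j : Fin I.index),
          e (ρ (i : G) v) j = (χ i : k) * e v j) := by
  have : Nontrivial V := nontrivial_of_finrank_eq_succ hV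
  have hscalar (i : I) : ∃ c : k, ∀ v, ρ (i : G) v = c • v := by
    obtain ⟨a, ha⟩ := exists_eq_smul_of_mem_ker (g := (i : G)) hV hsemi (by rw [hker]; exact i.2)
    have hfixed (σ : Gal(l/k)) : σ a = a := by
      obtain ⟨g, rfl⟩ := hπ σ
      exact apply_scalar_eq_of_commute hsemi (Subgroup.mem_center_iff.mp (hcentral i.2) g) ha
    obtain ⟨c, rfl⟩ := (IsGalois.mem_range_algebraMap_iff_fixed a).mpr hfixed
    exact ⟨c, fun v => by rw [ha, algebraMap_smul]⟩
  obtain ⟨χ, hχ⟩ : ∃ χ : I →* k, ∀ (i : I) v, ρ (i : G) v = χ i • v :=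
    Representation.exists_monoidHom_of_forall_exists_smul (ρ.comp I.subtype) hscalar
  refine ⟨fun i => ⟨χ i, by rw [← map_pow, pow_card_eq_one', map_one],
    fun v => by rw [algebraMap_smul]; exact hχ i v⟩, ?_⟩
  have : FiniteDimensional l V := .of_finrank_eq_succ hV
  have : FiniteDimensional k V := Module.Finite.trans l V
  have hdim : finrank k V = I.index := by
    rw [← finrank_mul_finrank k l V, hV, mul_one, ← hker,
      π.index_ker_eq_finrank_of_surjective hπ]
  refine ⟨χ.toHomUnits, (finBasisOfFinrankEq k V hdim).equivFun, fun i v j => ?_⟩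
  simp [hχ]

/-- Proposition 3.6 (b), first part: let `l/k` be a finite Galois
extension, `G` a finite group with a cyclic normal subgroup `I` such that
`G/I ≅ Gal(l/k)`, and `V` a one-dimensional `l`-vector space with a semilinear
`G`-action.  If `I` is central in `G`, then the roots of unity through which `I` acts
on `V` all lie in `k`, and there is a one-dimensional `k`-representation `χ` of `I`
such that `Res_I^G V ≅ ⊕^{(G:I)} χ` as `k[I]`-modules. -/
theorem res_iso_of_central_inertia
    (k l : Type u) [Field k] [Field l] [Algebra k l] [FiniteDimensional k l] [IsGalois k l]
    (G : Type u) [Group G] [Finite G] (I : Subgroup G) [I.Normal] [IsCyclic ↥I]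
    (π : G →* (l ≃ₐ[k] l)) (hπ : Surjective π) (hker : π.ker = I)
    (V : Type u) [AddCommGroup V] [Module k V] [Module l V] [IsScalarTower k l V]
    (hV : Module.finrank l V = 1)
    (ρ : Representation k G V)
    (hsemi : ∀ (g : G) (a : l) (v : V), ρ g (a • v) = (π g a) • (ρ g v))
    (hcentral : I ≤ Subgroup.center G) :
    (∀ i : ↥I, ∃ c : k, c ^ Nat.card ↥I = 1 ∧
        ∀ v : V, ρ (i : G) v = algebraMap k l c • v) ∧
    (∃ χ : ↥I →* kˣ, ∃ e : V ≃ₗ[k] (Fin I.index → k),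
        ∀ (i : ↥I) (v : V) (j : Fin I.index),
          e (ρ (i : G) v) j = (χ i : k) * e v j) :=
  res_iso_of_central_inertia_general k l G I π hπ hker V hV ρ hsemi hcentral
end

section
/- Let X be a scheme of finite type over a perfect field k and let Ω_{X/k} be the sheaf of relative differentials of X over k. Then for every closed point P of X, the canonical map m_P/m_P² → Ω_{X/k}(P) is an isomorphism. -/
universe u

open AlgebraicGeometry CategoryTheory IsLocalRing

open scoped TensorProduct

/-- The `k`-algebra structure on the stalks of a scheme over `Spec k`. -/
noncomputable def stalkAlgebra (k : Type u) [Field k] (X : Scheme.{u})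
    (f : X ⟶ Spec (CommRingCat.of k)) (P : X) : Algebra k (X.presheaf.stalk P) :=
  RingHom.toAlgebra
    ((Scheme.ΓSpecIso (CommRingCat.of k)).inv ≫ f.appTop ≫ X.presheaf.Γgerm P).hom

section CotangentMap

variable (k S : Type u) [CommRing k] [CommRing S] [IsLocalRing S] [Algebra k S]

/-- The `S`-linear map `m → S/m ⊗_S Ω_{S/k}`, `x ↦ 1 ⊗ dx`. -/
noncomputable def maximalIdealToOmegaFibre :
    ↥(maximalIdeal S) →ₗ[S] (ResidueField S) ⊗[S] (Ω[S⁄k]) where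
  toFun x := (1 : ResidueField S) ⊗ₜ[S] (KaehlerDifferential.D k S (x : S))
  map_add' x y := by simp [TensorProduct.tmul_add]
  map_smul' s x := by
    have hx : ((s • x : ↥(maximalIdeal S)) : S) = s * (x : S) := rfl
    have h0 : ((x : S) • ((1 : ResidueField S) ⊗ₜ[S] (KaehlerDifferential.D k S s))
        : (ResidueField S) ⊗[S] (Ω[S⁄k])) = 0 := by
      rw [TensorProduct.smul_tmul']
      have h1 : ((x : S) • (1 : ResidueField S)) = 0 := by
        rw [Algebra.smul_def, mul_one]
        exact Ideal.Quotient.eq_zero_iff_mem.mpr x.2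
      rw [h1, TensorProduct.zero_tmul]
    simp only [hx, Derivation.leibniz, TensorProduct.tmul_add, TensorProduct.tmul_smul,
      RingHom.id_apply, h0, add_zero]

/-- The canonical map `m/m² → Ω_{S/k}(P) = Ω_{S/k} ⊗_S S/m` for a local `k`-algebra `S`,
induced by `x ↦ dx ⊗ 1`. -/
noncomputable def cotangentToOmegaFibre :
    (maximalIdeal S).Cotangent →ₗ[S] (ResidueField S) ⊗[S] (Ω[S⁄k]) :=
  Submodule.liftQ _ (maximalIdealToOmegaFibre k S)
    (by
      refine Submodule.smul_le.mpr ?_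
      intro s hs x _
      rw [LinearMap.mem_ker, map_smul]
      show s • ((1 : ResidueField S) ⊗ₜ[S] (KaehlerDifferential.D k S (x : S))) = 0
      rw [TensorProduct.smul_tmul']
      have h1 : (s • (1 : ResidueField S)) = 0 := by
        rw [Algebra.smul_def, mul_one]
        exact Ideal.Quotient.eq_zero_iff_mem.mpr hs
      rw [h1, TensorProduct.zero_tmul])

/-!
Write `S = 𝒪_{X,P}` and `κ = κ(P)`. Because `P` is closed, `Spec κ → X` is a closed immersion, so
`Spec κ → Spec k` is of finite type, hence finite since `Spec k` is Jacobson; as `k` is perfect,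
`κ/k` is separable, hence formally étale. The map in question is the first map of the conormal
sequence `m/m² → κ ⊗_S Ω_{S/k} → Ω_{κ/k} → 0`. Its cokernel `Ω_{κ/k}` vanishes because `κ/k` is
formally unramified, and formal smoothness of `κ/k` gives a section of `S/m² → κ`, which is the
same as a retraction of `m/m² → κ ⊗_S Ω_{S/k}`.
-/

open KaehlerDifferential

section KerCotangent

variable {R P A : Type*} [CommRing R] [CommRing P] [CommRing A] [Algebra R P] [Algebra R A]

theorem AlgHom.exists_kerSquareLift_section [Algebra.FormallySmooth R A] (f : P →ₐ[R] A)
    (hf : Function.Surjective f) :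
    ∃ g, f.kerSquareLift.comp g = AlgHom.id R A := by
  have hsurj : Function.Surjective f.kerSquareLift :=
    Ideal.Quotient.lift_surjective_of_surjective _ _ hf
  have hnil : IsNilpotent (RingHom.ker f.kerSquareLift.toRingHom) :=
    ⟨2, by rw [AlgHom.ker_kerSquareLift, Ideal.cotangentIdeal_square, Ideal.zero_eq_bot]⟩
  exact ⟨_, Algebra.FormallySmooth.comp_liftOfSurjective _ _ hsurj hnil⟩

variable [Algebra P A] [IsScalarTower R P A]

theorem kerCotangentToTensor_injective_of_formallySmooth [Algebra.FormallySmooth R A]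
    (hf : Function.Surjective (algebraMap P A)) :
    Function.Injective (kerCotangentToTensor R P A) := by
  obtain ⟨g, hg⟩ := (IsScalarTower.toAlgHom R P A).exists_kerSquareLift_section hf
  obtain ⟨l, hl⟩ := (retractionKerCotangentToTensorEquivSection hf).symm ⟨g, hg⟩
  exact Function.LeftInverse.injective (LinearMap.congr_fun hl)

theorem kerCotangentToTensor_surjective_of_formallyUnramified [Algebra.FormallyUnramified R A]
    (hf : Function.Surjective (algebraMap P A)) :
    Function.Surjective (kerCotangentToTensor R P A) := fun y ↦
  (exact_kerCotangentToTensor_mapBaseChange R P A hf y).mp (Subsingleton.elim _ _)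

end KerCotangent

section Local

variable (k S : Type u) [CommRing k] [CommRing S] [IsLocalRing S] [Algebra k S]

theorem cotangentToOmegaFibre_eq_kerCotangentToTensor_comp :
    cotangentToOmegaFibre k S = kerCotangentToTensor k S (ResidueField S) ∘ₗ
      (Ideal.Cotangent.equivOfEq (maximalIdeal S) (RingHom.ker (algebraMap S (ResidueField S)))
        (ker_residue (R := S)).symm).toLinearMap := by
  ext x
  obtain ⟨x, rfl⟩ := Ideal.toCotangent_surjective _ x
  rfl

theorem cotangentToOmegaFibre_bijective [Algebra.FormallyEtale k (ResidueField S)] :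
    Function.Bijective (cotangentToOmegaFibre k S) := by
  rw [cotangentToOmegaFibre_eq_kerCotangentToTensor_comp, LinearMap.coe_comp, LinearEquiv.coe_coe]
  refine Function.Bijective.comp ⟨?_, ?_⟩ (LinearEquiv.bijective _)
  · exact kerCotangentToTensor_injective_of_formallySmooth residue_surjective
  · exact kerCotangentToTensor_surjective_of_formallyUnramified residue_surjective

end Local

namespace AlgebraicGeometry

theorem Spec.preimage_eq_appTop {R S : CommRingCat.{u}} (g : Spec S ⟶ Spec R) :
    Spec.preimage g = (Scheme.ΓSpecIso R).inv ≫ g.appTop ≫ (Scheme.ΓSpecIso S).hom := by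
  obtain ⟨φ, rfl⟩ := Spec.map_surjective g
  simp

theorem Spec.preimage_fromSpecResidueField_comp {X : Scheme.{u}} {R : CommRingCat.{u}}
    (f : X ⟶ Spec R) (x : X) :
    Spec.preimage (X.fromSpecResidueField x ≫ f) =
      (Scheme.ΓSpecIso R).inv ≫ f.appTop ≫ X.presheaf.Γgerm x ≫ X.residue x := by
  rw [Spec.preimage_eq_appTop, Scheme.fromSpecResidueField, Scheme.Hom.comp_appTop,
    Scheme.Hom.comp_appTop, Scheme.fromSpecStalk_appTop]
  simp only [Category.assoc, Scheme.ΓSpecIso_naturality]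
  simp [TopCat.Presheaf.Γgerm]

theorem finite_residueField_of_isClosed (k : Type u) [Field k] (X : Scheme.{u})
    (f : X ⟶ Spec (CommRingCat.of k)) [LocallyOfFiniteType f] (P : X)
    (hP : IsClosed ({P} : Set X)) :
    letI := stalkAlgebra k X f P
    Module.Finite k (ResidueField (X.presheaf.stalk P)) := by
  let := stalkAlgebra k X f P
  have : IsClosedImmersion (X.fromSpecResidueField P) :=
    isClosed_singleton_iff_isClosedImmersion.mp hP
  have : IsFinite (X.fromSpecResidueField P ≫ f) :=
    isFinite_iff_locallyOfFiniteType_of_jacobsonSpace.mpr inferInstance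
  rw [← Spec.map_preimage (X.fromSpecResidueField P ≫ f), IsFinite.SpecMap_iff,
    Spec.preimage_fromSpecResidueField_comp] at this
  exact RingHom.finite_algebraMap.mp this

end AlgebraicGeometry

theorem cotangentSpace_iso_omega_fibre_general (k : Type u) [Field k] [PerfectField k]
    (X : Scheme.{u}) (f : X ⟶ Spec (CommRingCat.of k))
    [LocallyOfFiniteType f]
    (P : X) (hP : IsClosed ({P} : Set X)) :
    letI := stalkAlgebra k X f P
    Function.Bijective (cotangentToOmegaFibre k (X.presheaf.stalk P)) := by
  let := stalkAlgebra k X f P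
  have := finite_residueField_of_isClosed k X f P hP
  have : Algebra.FormallyEtale k (ResidueField (X.presheaf.stalk P)) := .of_isSeparable _ _
  exact cotangentToOmegaFibre_bijective k _

/-- **Statement 9** (Proposition 1.5): let `X` be a scheme of finite type over a perfect
field `k` and let `Ω_{X/k}` be the sheaf of relative differentials.  For every closed
point `P` of `X`, the canonical map `m_P/m_P² → Ω_{X/k}(P)` is an isomorphism.
(The fibre of `Ω_{X/k}` at `P` is canonically `Ω_{O_{X,P}/k} ⊗ k(P)`.) -/
theorem cotangentSpace_iso_omega_fibre (k : Type u) [Field k] [PerfectField k]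
    (X : Scheme.{u}) (f : X ⟶ Spec (CommRingCat.of k))
    [LocallyOfFiniteType f] [QuasiCompact f]
    (P : X) (hP : IsClosed ({P} : Set X)) :
    letI := stalkAlgebra k X f P
    Function.Bijective (cotangentToOmegaFibre k (X.presheaf.stalk P)) :=
  cotangentSpace_iso_omega_fibre_general k X f P hP
end CotangentMap
end
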